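/- arXiv:1709.08874 — 4 statements merged into one kernel-verified Lean document; each statement's English description precedes it below -/
import Mathlib

section
/- The sabra shell bilinear map B satisfies |B(u,v)| ≤ C₁ |u| ‖v‖_V for all u ∈ H and v ∈ V, where C₁ = |a|(λ^{-1}+λ) + |b|(λ^{-1}+1). -/
/-- The sabra shell model bilinear map `B(u,v)`, with the convention
`u₀ = u₋₁ = v₀ = v₋₁ = 0` (the entry at `n = 0` is set to `0` and negative
indices are handled by truncated subtraction together with the hypothesis
`u 0 = 0`). -/
noncomputable def shellB (k : ℕ → ℝ) (a b : ℝ) (u v : ℕ → ℂ) : ℕ → ℂ := fun n =>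
  if n = 0 then 0 else
    (-Complex.I) * ((a : ℂ) * (k (n + 1) : ℂ) * v (n + 2) * (starRingEnd ℂ) (u (n + 1))
      + (b : ℂ) * (k n : ℂ) * v (n + 1) * (starRingEnd ℂ) (u (n - 1))
      + (a : ℂ) * (k (n - 1) : ℂ) * u (n - 1) * v (n - 2)
      + (b : ℂ) * (k (n - 1) : ℂ) * v (n - 1) * u (n - 2))

/-!
Every entry of `B(u, v)` is a sum of four products `k_m v_{m'} u_{m''}` with `|m - m'| ≤ 1`;
trading `k_m` for `k_{m'}` costs a factor `λ` or `λ⁻¹`. Bounding each `|u_{m''}|` by `|u|`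
dominates `|B(u, v)_n|` by `|u|` times a combination of shifts of the sequence `|k_n| |v_n|`,
each of ℓ²-norm at most `‖v‖_V`, and Minkowski's inequality adds up the coefficients.
-/

def L2NormLE {ι : Type*} (f : ι → ℝ) (A : ℝ) : Prop :=
  Summable (fun i => f i ^ 2) ∧ √(∑' i, f i ^ 2) ≤ A

namespace L2NormLE

section
variable {ι : Type*} {f g : ι → ℝ} {A B : ℝ}

theorem abs_le (hf : L2NormLE f A) (i : ι) : |f i| ≤ A :=
  (Real.abs_le_sqrt (hf.1.le_tsum i fun j _ => sq_nonneg (f j))).trans hf.2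

theorem of_abs_le (hg : L2NormLE g A) (hfg : ∀ i, |f i| ≤ g i) : L2NormLE f A := by
  have hsq : ∀ i, f i ^ 2 ≤ g i ^ 2 := fun i => sq_le_sq.2 ((hfg i).trans (le_abs_self _))
  have hf : Summable fun i => f i ^ 2 := hg.1.of_nonneg_of_le (fun i => sq_nonneg _) hsq
  exact ⟨hf, (Real.sqrt_le_sqrt (hf.tsum_le_tsum hsq hg.1)).trans hg.2⟩

theorem abs (hf : L2NormLE f A) : L2NormLE (fun i => |f i|) A := by
  simpa only [L2NormLE, sq_abs] using hf

theorem const_mul (hf : L2NormLE f A) (c : ℝ) : L2NormLE (fun i => c * f i) (|c| * A) := by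
  have hsq : (fun i => (c * f i) ^ 2) = fun i => c ^ 2 * f i ^ 2 :=
    funext fun i => mul_pow c (f i) 2
  refine ⟨hsq ▸ hf.1.mul_left _, ?_⟩
  rw [hsq, tsum_mul_left, Real.sqrt_mul (sq_nonneg c), Real.sqrt_sq_eq_abs]
  exact mul_le_mul_of_nonneg_left hf.2 (abs_nonneg c)

theorem add_of_nonneg (hf0 : ∀ i, 0 ≤ f i) (hg0 : ∀ i, 0 ≤ g i) (hf : L2NormLE f A)
    (hg : L2NormLE g B) : L2NormLE (fun i => f i + g i) (A + B) := by
  have minkowski := Real.Lp_add_le_tsum_of_nonneg (p := 2) one_le_two hf0 hg0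
  simp only [Real.rpow_two, ← Real.sqrt_eq_rpow] at minkowski
  obtain ⟨hsum, hle⟩ := minkowski hf.1 hg.1
  exact ⟨hsum, hle.trans (add_le_add hf.2 hg.2)⟩

theorem add (hf : L2NormLE f A) (hg : L2NormLE g B) : L2NormLE (fun i => f i + g i) (A + B) :=
  (add_of_nonneg (fun i => abs_nonneg (f i)) (fun i => abs_nonneg (g i)) hf.abs hg.abs).of_abs_le
    fun i => abs_add_le (f i) (g i)

end

variable {f : ℕ → ℝ} {A : ℝ}

theorem comp_add_right (hf : L2NormLE f A) (j : ℕ) : L2NormLE (fun n => f (n + j)) A :=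
  ⟨(summable_nat_add_iff j).2 hf.1, (Real.sqrt_le_sqrt (tsum_comp_le_tsum_of_inj hf.1
    (fun n => sq_nonneg (f n)) (add_left_injective j))).trans hf.2⟩

theorem comp_sub_right (hf : L2NormLE f A) (h0 : f 0 = 0) (j : ℕ) :
    L2NormLE (fun n => f (n - j)) A := by
  have hshift : (fun n => f (n + j - j) ^ 2) = fun n => f n ^ 2 := by simp
  have hsum : Summable fun n => f (n - j) ^ 2 := (summable_nat_add_iff j).1 (hshift ▸ hf.1)
  have htsum : ∑' n, f (n - j) ^ 2 = ∑' n, f n ^ 2 := by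
    rw [← hsum.sum_add_tsum_nat_add j, hshift,
      Finset.sum_eq_zero fun i hi => by rw [Nat.sub_eq_zero_of_le (Finset.mem_range.1 hi).le, h0,
        sq, zero_mul], zero_add]
  exact ⟨hsum, htsum ▸ hf.2⟩

end L2NormLE

theorem norm_shellB_le {k : ℕ → ℝ} {lam a b U : ℝ} {u v : ℕ → ℂ} (hlam : 0 < lam)
    (hk : ∀ n, k (n + 1) = lam * k n) (hv0 : v 0 = 0) (hu : ∀ m, ‖u m‖ ≤ U) (n : ℕ) :
    ‖shellB k a b u v n‖ ≤ U * (|a| * lam⁻¹ * (|k (n + 2)| * ‖v (n + 2)‖)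
      + |b| * lam⁻¹ * (|k (n + 1)| * ‖v (n + 1)‖) + |a| * lam * (|k (n - 2)| * ‖v (n - 2)‖)
      + |b| * (|k (n - 1)| * ‖v (n - 1)‖)) := by
  have hU : 0 ≤ U := (norm_nonneg _).trans (hu 0)
  have hk_abs : ∀ m, |k m| = lam⁻¹ * |k (m + 1)| := fun m => by
    rw [hk, abs_mul, abs_of_pos hlam, inv_mul_cancel_left₀ hlam.ne']
  have hk_abs_pred : ∀ m, |k m| * ‖v (m - 1)‖ ≤ lam * (|k (m - 1)| * ‖v (m - 1)‖) := by
    rintro (_ | m)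
    · simp [hv0]
    · rw [Nat.add_sub_cancel, hk, abs_mul, abs_of_pos hlam, mul_assoc]
  rcases n with _ | n
  · simp only [shellB, if_true, norm_zero]
    positivity
  rw [shellB, if_neg n.add_one_ne_zero, norm_mul, norm_neg, Complex.norm_I, one_mul]
  refine norm_add₄_le.trans ?_
  simp only [norm_mul, Complex.norm_real, Real.norm_eq_abs, Complex.norm_conj, Nat.add_sub_cancel,
    show n + 1 - 2 = n - 1 by omega]
  calc _ = |a| * lam⁻¹ * (|k (n + 3)| * ‖v (n + 3)‖) * ‖u (n + 2)‖
        + |b| * lam⁻¹ * (|k (n + 2)| * ‖v (n + 2)‖) * ‖u n‖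
        + |a| * (|k n| * ‖v (n - 1)‖) * ‖u n‖ + |b| * (|k n| * ‖v n‖) * ‖u (n - 1)‖ := by
        linear_combination (|a| * ‖v (n + 3)‖ * ‖u (n + 2)‖) * hk_abs (n + 2)
          + (|b| * ‖v (n + 2)‖ * ‖u n‖) * hk_abs (n + 1)
    _ ≤ |a| * lam⁻¹ * (|k (n + 3)| * ‖v (n + 3)‖) * U
        + |b| * lam⁻¹ * (|k (n + 2)| * ‖v (n + 2)‖) * U
        + |a| * (lam * (|k (n - 1)| * ‖v (n - 1)‖)) * U + |b| * (|k n| * ‖v n‖) * U := by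
        gcongr |a| * lam⁻¹ * _ * ?_ + |b| * lam⁻¹ * _ * ?_ + |a| * ?_ * ?_ + |b| * _ * ?_
        all_goals first | exact hu _ | exact hk_abs_pred n
    _ = _ := by ring

theorem shellB_bound_H_V_general (k0 lam a b : ℝ) (hlam : 1 < lam)
    (k : ℕ → ℝ) (hk : ∀ n, k n = k0 * lam ^ n)
    (u v : ℕ → ℂ) (hv0 : v 0 = 0)
    (hu : Summable (fun n => ‖u n‖ ^ 2))
    (hv : Summable (fun n => (k n) ^ 2 * ‖v n‖ ^ 2)) :
    Real.sqrt (∑' n, ‖shellB k a b u v n‖ ^ 2)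
      ≤ (|a| * (lam⁻¹ + lam) + |b| * (lam⁻¹ + 1))
          * Real.sqrt (∑' n, ‖u n‖ ^ 2)
          * Real.sqrt (∑' n, (k n) ^ 2 * ‖v n‖ ^ 2) := by
  set U := √(∑' n, ‖u n‖ ^ 2)
  set W := √(∑' n, k n ^ 2 * ‖v n‖ ^ 2)
  have hlam0 : 0 < lam := one_pos.trans hlam
  have hk_succ : ∀ n, k (n + 1) = lam * k n := fun n => by rw [hk, hk, pow_succ]; ring
  have hu_le : ∀ m, ‖u m‖ ≤ U := fun m => by
    simpa only [abs_norm] using L2NormLE.abs_le (f := fun n => ‖u n‖) ⟨hu, le_rfl⟩ m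
  have hg : L2NormLE (fun n => |k n| * ‖v n‖) W := by
    simp only [L2NormLE, mul_pow, sq_abs]
    exact ⟨hv, le_rfl⟩
  have hg0 : |k 0| * ‖v 0‖ = 0 := by rw [hv0, norm_zero, mul_zero]
  have hmajorant := (((((hg.comp_add_right 2).const_mul (|a| * lam⁻¹)).add
    ((hg.comp_add_right 1).const_mul (|b| * lam⁻¹))).add
    ((hg.comp_sub_right hg0 2).const_mul (|a| * lam))).add
    ((hg.comp_sub_right hg0 1).const_mul |b|)).const_mul U
  have hB := hmajorant.of_abs_le (f := fun n => ‖shellB k a b u v n‖) fun n =>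
    (abs_norm _).trans_le (norm_shellB_le hlam0 hk_succ hv0 hu_le n)
  refine hB.2.trans_eq ?_
  have hU0 : 0 ≤ U := Real.sqrt_nonneg _
  simp only [abs_mul, abs_abs, abs_inv, abs_of_pos hlam0, abs_of_nonneg hU0]
  ring

/-- `|B(u,v)| ≤ C₁ |u| ‖v‖_V` with
`C₁ = |a|(λ⁻¹+λ) + |b|(λ⁻¹+1)`. -/
theorem shellB_bound_H_V (k0 lam a b : ℝ) (hk0 : 0 < k0) (hlam : 1 < lam)
    (k : ℕ → ℝ) (hk : ∀ n, k n = k0 * lam ^ n)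
    (u v : ℕ → ℂ) (hu0 : u 0 = 0) (hv0 : v 0 = 0)
    (hu : Summable (fun n => ‖u n‖ ^ 2))
    (hv : Summable (fun n => (k n) ^ 2 * ‖v n‖ ^ 2)) :
    Real.sqrt (∑' n, ‖shellB k a b u v n‖ ^ 2)
      ≤ (|a| * (lam⁻¹ + lam) + |b| * (lam⁻¹ + 1))
          * Real.sqrt (∑' n, ‖u n‖ ^ 2)
          * Real.sqrt (∑' n, (k n) ^ 2 * ‖v n‖ ^ 2) :=
  shellB_bound_H_V_general k0 lam a b hlam k hk u v hv0 hu hv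
end

section
/- For the sabra shell bilinear map B with coefficients satisfying a + b + c = 0, the energy conservation identity Re(B(u,u), u) = 0 holds for all u ∈ V, where (·,·) is the l² inner product (u,v) = ∑ uₙ vₙ*. -/
/-- The sabra shell model nonlinearity `B(u,u)` written with the three
coefficients `a, b, c`, with the convention `u₀ = u₋₁ = 0`. -/
noncomputable def shellBdiag (k : ℕ → ℝ) (a b c : ℝ) (u : ℕ → ℂ) : ℕ → ℂ := fun n =>
  if n = 0 then 0 else
    (-Complex.I) * ((a : ℂ) * (k (n + 1) : ℂ) * u (n + 2) * (starRingEnd ℂ) (u (n + 1))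
      + (b : ℂ) * (k n : ℂ) * u (n + 1) * (starRingEnd ℂ) (u (n - 1))
      - (c : ℂ) * (k (n - 1) : ℂ) * u (n - 1) * u (n - 2))

/-!
Write `Tⱼ = kⱼ uⱼ₊₁ uⱼ* uⱼ₋₁*` for the triad products. Term by term
`B(u,u)ₙ uₙ* = -i (a Tₙ₊₁ + b Tₙ - c Tₙ₋₁*)`, and `T₀ = 0` since `u₀ = 0`. As `kₙ ≥ k₀ > 0`,
`u ∈ V` lies in `l²` and `k u` is bounded, so `|Tⱼ| ≤ ‖k u‖_∞ (|uⱼ₊₁|² + |uⱼ₋₁|²) / 2` makes the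
triads absolutely summable. The three shifted sums are then all `S = ∑ Tⱼ`, so
`(B(u,u), u) = -i (a S + b S - c S*)`, whose real part is `(a + b + c) Im S = 0`.
-/

open ComplexConjugate

section Shift

variable {G : Type*} [AddCommGroup G] [TopologicalSpace G] [IsTopologicalAddGroup G]

theorem Summable.comp_nat_sub_one {f : ℕ → G} (hf : Summable f) :
    Summable fun n => f (n - 1) :=
  (summable_nat_add_iff 1).mp (by simpa using hf)

variable [T2Space G]

theorem Summable.tsum_comp_nat_add_one {f : ℕ → G} (hf : Summable f) (h0 : f 0 = 0) :
    ∑' n, f (n + 1) = ∑' n, f n := by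
  rw [hf.tsum_eq_zero_add, h0, zero_add]

theorem Summable.tsum_comp_nat_sub_one {f : ℕ → G} (hf : Summable f) (h0 : f 0 = 0) :
    ∑' n, f (n - 1) = ∑' n, f n := by
  rw [hf.comp_nat_sub_one.tsum_eq_zero_add]
  simp [h0]

end Shift

section Weighted

variable {k : ℕ → ℝ} {u : ℕ → ℂ}

theorem summable_norm_sq_of_summable_weighted {κ : ℝ} (hκ : 0 < κ) (hk : ∀ n, κ ≤ k n)
    (hu : Summable fun n => k n ^ 2 * ‖u n‖ ^ 2) : Summable fun n => ‖u n‖ ^ 2 := by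
  refine .of_nonneg_of_le (fun n => by positivity) (fun n => ?_) (hu.mul_left (κ ^ 2)⁻¹)
  rw [le_inv_mul_iff₀ (by positivity)]
  gcongr
  exact hk n

theorem abs_mul_norm_le_sqrt_tsum (hu : Summable fun n => k n ^ 2 * ‖u n‖ ^ 2) (n : ℕ) :
    |k n| * ‖u n‖ ≤ √(∑' j, k j ^ 2 * ‖u j‖ ^ 2) := by
  have h := hu.le_tsum n fun j _ => by positivity
  rw [← abs_norm, ← abs_mul]
  exact Real.abs_le_sqrt (by rwa [mul_pow])

end Weighted

noncomputable def shellTriad (k : ℕ → ℝ) (u : ℕ → ℂ) (j : ℕ) : ℂ :=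
  (k j : ℂ) * u (j + 1) * conj (u j) * conj (u (j - 1))

theorem norm_shellTriad (k : ℕ → ℝ) (u : ℕ → ℂ) (j : ℕ) :
    ‖shellTriad k u j‖ = |k j| * ‖u j‖ * (‖u (j + 1)‖ * ‖u (j - 1)‖) := by
  simp only [shellTriad, norm_mul, Complex.norm_real, Real.norm_eq_abs, Complex.norm_conj]
  ring

theorem summable_shellTriad {k : ℕ → ℝ} {u : ℕ → ℂ}
    (hku : Summable fun n => k n ^ 2 * ‖u n‖ ^ 2) (hu : Summable fun n => ‖u n‖ ^ 2) :
    Summable (shellTriad k u) := by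
  set C := √(∑' j, k j ^ 2 * ‖u j‖ ^ 2)
  have hbound : Summable fun n => C * ((‖u (n + 1)‖ ^ 2 + ‖u (n - 1)‖ ^ 2) / 2) :=
    ((((summable_nat_add_iff 1).mpr hu).add hu.comp_nat_sub_one).div_const 2).mul_left C
  refine .of_norm_bounded hbound fun n => ?_
  rw [norm_shellTriad]
  have hamgm : ‖u (n + 1)‖ * ‖u (n - 1)‖ ≤ (‖u (n + 1)‖ ^ 2 + ‖u (n - 1)‖ ^ 2) / 2 := by
    linarith [two_mul_le_add_sq ‖u (n + 1)‖ ‖u (n - 1)‖]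
  exact mul_le_mul (abs_mul_norm_le_sqrt_tsum hku n) hamgm (by positivity) (Real.sqrt_nonneg _)

theorem shellBdiag_mul_conj {k : ℕ → ℝ} (a b c : ℝ) {u : ℕ → ℂ} (hu0 : u 0 = 0) (n : ℕ) :
    shellBdiag k a b c u n * conj (u n) =
      -Complex.I * (a * shellTriad k u (n + 1) + b * shellTriad k u n
        - c * conj (shellTriad k u (n - 1))) := by
  rcases n with _ | j
  · simp [shellBdiag, shellTriad, hu0]
  · have hj : j + 1 - 2 = j - 1 := by omega
    simp only [shellBdiag, shellTriad, Nat.succ_ne_zero, if_false, map_mul, Complex.conj_conj,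
      Complex.conj_ofReal, Nat.add_sub_cancel, hj]
    ring

theorem tsum_shellBdiag_mul_conj {k : ℕ → ℝ} (a b c : ℝ) {u : ℕ → ℂ} (hu0 : u 0 = 0)
    (hT : Summable (shellTriad k u)) :
    ∑' n, shellBdiag k a b c u n * conj (u n) =
      -Complex.I * (a * ∑' n, shellTriad k u n + b * ∑' n, shellTriad k u n
        - c * conj (∑' n, shellTriad k u n)) := by
  have hT0 : shellTriad k u 0 = 0 := by simp [shellTriad, hu0]
  have hA : Summable fun n => (a : ℂ) * shellTriad k u (n + 1) :=
    ((summable_nat_add_iff 1).mpr hT).mul_left (a : ℂ)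
  have hB : Summable fun n => (b : ℂ) * shellTriad k u n := hT.mul_left (b : ℂ)
  have hC : Summable fun n => (c : ℂ) * conj (shellTriad k u (n - 1)) :=
    (Complex.summable_conj.mpr hT.comp_nat_sub_one).mul_left (c : ℂ)
  simp_rw [shellBdiag_mul_conj a b c hu0]
  rw [tsum_mul_left, (hA.add hB).tsum_sub hC, hA.tsum_add hB, tsum_mul_left, tsum_mul_left,
    tsum_mul_left, hT.tsum_comp_nat_add_one hT0, ← Complex.conj_tsum,
    hT.tsum_comp_nat_sub_one hT0]

theorem shellB_energy_conservation_general (k0 lam a b c : ℝ) (hk0 : 0 < k0) (hlam : 1 < lam)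
    (habc : a + b + c = 0)
    (k : ℕ → ℝ) (hk : ∀ n, k n = k0 * lam ^ n)
    (u : ℕ → ℂ) (hu0 : u 0 = 0)
    (hu : Summable (fun n => (k n) ^ 2 * ‖u n‖ ^ 2)) :
    (∑' n, shellBdiag k a b c u n * (starRingEnd ℂ) (u n)).re = 0 := by
  have hk_ge : ∀ n, k0 ≤ k n := fun n => by
    rw [hk]; exact le_mul_of_one_le_right hk0.le (one_le_pow₀ hlam.le)
  have hT := summable_shellTriad hu (summable_norm_sq_of_summable_weighted hk0 hk_ge hu)
  rw [tsum_shellBdiag_mul_conj a b c hu0 hT]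
  rw [neg_mul, Complex.neg_re, Complex.I_mul_re, neg_neg]
  simp only [Complex.sub_im, Complex.add_im, Complex.im_ofReal_mul, Complex.conj_im]
  linear_combination (∑' n, shellTriad k u n).im * habc

/-- energy conservation `Re (B(u,u), u) = 0` when `a + b + c = 0`. -/
theorem shellB_energy_conservation (k0 lam a b c : ℝ) (hk0 : 0 < k0) (hlam : 1 < lam)
    (habc : a + b + c = 0)
    (k : ℕ → ℝ) (hk : ∀ n, k n = k0 * lam ^ n)
    (u : ℕ → ℂ) (hu0 : u 0 = 0)
    (hu : Summable (fun n => (k n) ^ 2 * ‖u n‖ ^ 2))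
    (hS : Summable (fun n => shellBdiag k a b c u n * (starRingEnd ℂ) (u n))) :
    (∑' n, shellBdiag k a b c u n * (starRingEnd ℂ) (u n)).re = 0 :=
  shellB_energy_conservation_general k0 lam a b c hk0 hlam habc k hk u hu0 hu
end

section
/- Characterization of the projection onto the helicity ball: for u ∈ D(A^{1/2}) with |A^{1/4}u| > ρ, the projection z = P_K(u) onto K = {y : ∑ kₙ|yₙ|² ≤ ρ²} satisfies the Lagrange-multiplier equation z + 4λ |A^{1/4}z| A^{1/2}z = u for some λ ≥ 0 (equivalently componentwise zₙ(1 + μkₙ) = uₙ for some μ ≥ 0 with ∑ kₙ|zₙ|² = ρ²). -/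
/-!
Outside the ball the projection is given by a Lagrange multiplier. The weighted norm
`∑ kₙ|uₙ|²/(1 + μkₙ)²` of `wₙ = uₙ/(1 + μkₙ)` decreases continuously from `∑ kₙ|uₙ|² > ρ²` at
`μ = 0` to `0` as `μ → ∞`, so some `μ ≥ 0` puts `w` on the sphere `∑ kₙ|wₙ|² = ρ²`. The identity
`|(1+t)w - y|² + t|y|² = |tw|² + t|w|² + (1+t)|w - y|²` with `t = μkₙ`, summed over `n` and combined
with `∑ kₙ|yₙ|² ≤ ρ² = ∑ kₙ|wₙ|²`, gives `|u - y|² ≥ |u - w|² + |w - y|²` for every `y` in the ball.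
Hence `w` is the unique nearest point, `z = w`, and `λ = μ/(4ρ)`.
-/

/-- Membership in the helicity ball `K = {y ∈ D(A^{1/4}) : ∑ₙ kₙ|yₙ|² ≤ ρ²}`. -/
def inHelicityBall (k : ℕ → ℝ) (ρ : ℝ) (y : ℕ → ℂ) : Prop :=
  Summable (fun n => k n * ‖y n‖ ^ 2) ∧ ∑' n, k n * ‖y n‖ ^ 2 ≤ ρ ^ 2

open Filter Topology Set

variable {ι : Type*} {k : ι → ℝ}

section Real

theorem div_one_add_mul_sq_le {a μ κ : ℝ} (ha : 0 ≤ a) (hμ : 0 ≤ μ) (hκ : 0 ≤ κ) :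
    a / (1 + μ * κ) ^ 2 ≤ a :=
  div_le_self ha (one_le_pow₀ (le_add_of_nonneg_right (mul_nonneg hμ hκ)))

theorem exists_tsum_div_one_add_mul_sq_eq (hk : ∀ i, 0 < k i) {a : ι → ℝ} (ha : Summable a)
    (ha0 : ∀ i, 0 ≤ a i) {r : ℝ} (hr : 0 < r) (hra : r ≤ ∑' i, a i) :
    ∃ μ, 0 ≤ μ ∧ ∑' i, a i / (1 + μ * k i) ^ 2 = r := by
  set F : ℝ → ℝ := fun μ => ∑' i, a i / (1 + μ * k i) ^ 2
  have hbound : ∀ μ, 0 ≤ μ → ∀ i, ‖a i / (1 + μ * k i) ^ 2‖ ≤ a i := fun μ hμ i => by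
    rw [Real.norm_of_nonneg (div_nonneg (ha0 i) (sq_nonneg _))]
    exact div_one_add_mul_sq_le (ha0 i) hμ (hk i).le
  have hcont : ContinuousOn F (Ici 0) := by
    refine continuousOn_tsum (fun i => ContinuousOn.div continuousOn_const (by fun_prop) ?_) ha
      fun i μ hμ => hbound μ hμ i
    intro μ hμ
    have : 0 < 1 + μ * k i := by have := mul_nonneg (mem_Ici.1 hμ) (hk i).le; linarith
    positivity
  have hlim : Tendsto F atTop (𝓝 0) := by
    have hterm : ∀ i, Tendsto (fun μ : ℝ => a i / (1 + μ * k i) ^ 2) atTop (𝓝 0) := fun i =>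
      tendsto_const_nhds.div_atTop <| (tendsto_pow_atTop two_ne_zero).comp <|
        tendsto_atTop_add_const_left _ 1 (tendsto_id.atTop_mul_const (hk i))
    simpa using tendsto_tsum_of_dominated_convergence ha hterm
      ((eventually_ge_atTop 0).mono hbound)
  obtain ⟨M, hFM, hM⟩ := ((hlim.eventually (gt_mem_nhds hr)).and (eventually_ge_atTop 0)).exists
  obtain ⟨μ, hμ, hFμ⟩ := intermediate_value_Icc' hM (hcont.mono Icc_subset_Ici_self)
    ⟨hFM.le, by simpa [F] using hra⟩
  exact ⟨μ, hμ.1, hFμ⟩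

end Real

section Normed

variable {E : Type*} [SeminormedAddCommGroup E]

theorem Summable.norm_sub_sq {x y : ι → E} (hx : Summable fun i => ‖x i‖ ^ 2)
    (hy : Summable fun i => ‖y i‖ ^ 2) : Summable fun i => ‖x i - y i‖ ^ 2 :=
  ((hx.add hy).mul_left 2).of_nonneg_of_le (fun _ => sq_nonneg _) fun _ =>
    (pow_le_pow_left₀ (norm_nonneg _) (norm_sub_le _ _) 2).trans add_sq_le

theorem summable_norm_sq_of_summable_mul_norm_sq {c : ℝ} (hc : 0 < c) (hck : ∀ i, c ≤ k i)
    {x : ι → E} (hx : Summable fun i => k i * ‖x i‖ ^ 2) : Summable fun i => ‖x i‖ ^ 2 :=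
  (hx.mul_left c⁻¹).of_nonneg_of_le (fun _ => sq_nonneg _) fun i => by
    rw [le_inv_mul_iff₀ hc]
    exact mul_le_mul_of_nonneg_right (hck i) (sq_nonneg _)

end Normed

section InnerProduct

variable {E : Type*} [NormedAddCommGroup E] [InnerProductSpace ℝ E]

theorem norm_smul_sub_sq_add_mul_norm_sq (t : ℝ) (w y : E) :
    ‖(1 + t) • w - y‖ ^ 2 + t * ‖y‖ ^ 2 =
      ‖(1 + t) • w - w‖ ^ 2 + t * ‖w‖ ^ 2 + (1 + t) * ‖w - y‖ ^ 2 := by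
  obtain ⟨a, rfl⟩ : ∃ a, y = w - a := ⟨w - y, by abel⟩
  rw [show (1 + t) • w - (w - a) = t • w + a by module, show (1 + t) • w - w = t • w by module,
    sub_sub_cancel, norm_add_sq_real, norm_sub_sq_real, real_inner_smul_left, norm_smul,
    Real.norm_eq_abs, mul_pow, sq_abs]
  ring

theorem exists_lagrange_multiplier (hk : ∀ i, 0 < k i) {u : ι → E}
    (hu : Summable fun i => k i * ‖u i‖ ^ 2) {r : ℝ} (hr : 0 < r)
    (hur : r ≤ ∑' i, k i * ‖u i‖ ^ 2) :
    ∃ μ, 0 ≤ μ ∧ ∃ w : ι → E, (∀ i, (1 + μ * k i) • w i = u i) ∧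
      Summable (fun i => k i * ‖w i‖ ^ 2) ∧ ∑' i, k i * ‖w i‖ ^ 2 = r := by
  have hu0 : ∀ i, 0 ≤ k i * ‖u i‖ ^ 2 := fun i => mul_nonneg (hk i).le (sq_nonneg _)
  obtain ⟨μ, hμ, hsum⟩ := exists_tsum_div_one_add_mul_sq_eq hk hu hu0 hr hur
  have hpos : ∀ i, 0 < 1 + μ * k i := fun i => by
    have := mul_nonneg hμ (hk i).le; linarith
  have hw : ∀ i, k i * ‖(1 + μ * k i)⁻¹ • u i‖ ^ 2 = k i * ‖u i‖ ^ 2 / (1 + μ * k i) ^ 2 :=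
    fun i => by
      rw [norm_smul, norm_inv, Real.norm_of_nonneg (hpos i).le]
      field_simp
  refine ⟨μ, hμ, fun i => (1 + μ * k i)⁻¹ • u i, fun i => smul_inv_smul₀ (hpos i).ne' _, ?_, ?_⟩
  · simp_rw [hw]
    exact hu.of_nonneg_of_le (fun i => div_nonneg (hu0 i) (sq_nonneg _))
      fun i => div_one_add_mul_sq_le (hu0 i) hμ (hk i).le
  · simp_rw [hw]
    exact hsum

variable {μ : ℝ} {u w y : ι → E}

theorem tsum_norm_sub_sq_add_le_of_smul_eq (hk : ∀ i, 0 ≤ k i) (hμ : 0 ≤ μ)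
    (huw : ∀ i, (1 + μ * k i) • w i = u i) (hu : Summable fun i => ‖u i‖ ^ 2)
    (hw : Summable fun i => ‖w i‖ ^ 2) (hy : Summable fun i => ‖y i‖ ^ 2)
    (hkw : Summable fun i => k i * ‖w i‖ ^ 2) (hky : Summable fun i => k i * ‖y i‖ ^ 2)
    (hyw : ∑' i, k i * ‖y i‖ ^ 2 ≤ ∑' i, k i * ‖w i‖ ^ 2) :
    ∑' i, ‖u i - w i‖ ^ 2 + ∑' i, ‖w i - y i‖ ^ 2 ≤ ∑' i, ‖u i - y i‖ ^ 2 := by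
  have hpoint : ∀ i, ‖u i - w i‖ ^ 2 + μ * (k i * ‖w i‖ ^ 2) + ‖w i - y i‖ ^ 2 ≤
      ‖u i - y i‖ ^ 2 + μ * (k i * ‖y i‖ ^ 2) := fun i => by
    have hid := norm_smul_sub_sq_add_mul_norm_sq (μ * k i) (w i) (y i)
    rw [huw] at hid
    nlinarith [mul_nonneg (mul_nonneg hμ (hk i)) (sq_nonneg ‖w i - y i‖)]
  have hsum := Summable.tsum_le_tsum hpoint
    (((hu.norm_sub_sq hw).add (hkw.mul_left μ)).add (hw.norm_sub_sq hy))
    ((hu.norm_sub_sq hy).add (hky.mul_left μ))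
  rw [Summable.tsum_add ((hu.norm_sub_sq hw).add (hkw.mul_left μ)) (hw.norm_sub_sq hy),
    Summable.tsum_add (hu.norm_sub_sq hw) (hkw.mul_left μ),
    Summable.tsum_add (hu.norm_sub_sq hy) (hky.mul_left μ), tsum_mul_left, tsum_mul_left] at hsum
  nlinarith [mul_le_mul_of_nonneg_left hyw hμ]

theorem eq_of_tsum_norm_sub_sq_le_of_smul_eq (hk : ∀ i, 0 ≤ k i) (hμ : 0 ≤ μ)
    (huw : ∀ i, (1 + μ * k i) • w i = u i) (hu : Summable fun i => ‖u i‖ ^ 2)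
    (hw : Summable fun i => ‖w i‖ ^ 2) (hy : Summable fun i => ‖y i‖ ^ 2)
    (hkw : Summable fun i => k i * ‖w i‖ ^ 2) (hky : Summable fun i => k i * ‖y i‖ ^ 2)
    (hyw : ∑' i, k i * ‖y i‖ ^ 2 ≤ ∑' i, k i * ‖w i‖ ^ 2)
    (hmin : ∑' i, ‖u i - y i‖ ^ 2 ≤ ∑' i, ‖u i - w i‖ ^ 2) : y = w := by
  have hle := tsum_norm_sub_sq_add_le_of_smul_eq hk hμ huw hu hw hy hkw hky hyw
  have hzero : ∑' i, ‖w i - y i‖ ^ 2 = 0 :=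
    le_antisymm (by linarith) (tsum_nonneg fun _ => sq_nonneg _)
  have hterm := (hasSum_zero_iff_of_nonneg fun i => sq_nonneg ‖w i - y i‖).1
    (hzero ▸ (hw.norm_sub_sq hy).hasSum)
  funext i
  simpa [sub_eq_zero, eq_comm] using congrFun hterm i

end InnerProduct

theorem helicity_ball_projection_lagrange_general (k0 lam0 ρ : ℝ)
    (hk0 : 0 < k0) (hlam0 : 1 < lam0) (hρ : 0 < ρ)
    (k : ℕ → ℝ) (hk : ∀ n, k n = k0 * lam0 ^ n)
    (u : ℕ → ℂ)
    (huout : ρ ^ 2 < ∑' n, k n * ‖u n‖ ^ 2)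
    (huA14 : Summable (fun n => k n * ‖u n‖ ^ 2))
    (z : ℕ → ℂ) (hzK : inHelicityBall k ρ z)
    (hzproj : ∀ y : ℕ → ℂ, inHelicityBall k ρ y →
      ∑' n, ‖u n - z n‖ ^ 2 ≤ ∑' n, ‖u n - y n‖ ^ 2) :
    (∃ l : ℝ, 0 ≤ l ∧ ∀ n,
        z n + (4 * l * Real.sqrt (∑' m, k m * ‖z m‖ ^ 2) * k n : ℝ) • z n = u n)
      ∧ (∃ μ : ℝ, 0 ≤ μ ∧ ∀ n, ((1 + μ * k n : ℝ) : ℂ) * z n = u n)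
      ∧ ∑' n, k n * ‖z n‖ ^ 2 = ρ ^ 2 := by
  have hck : ∀ n, k0 ≤ k n := fun n => by
    rw [hk]; exact le_mul_of_one_le_right hk0.le (one_le_pow₀ hlam0.le)
  have hkpos : ∀ n, 0 < k n := fun n => hk0.trans_le (hck n)
  have hl2 {x : ℕ → ℂ} := summable_norm_sq_of_summable_mul_norm_sq (x := x) hk0 hck
  obtain ⟨μ, hμ, w, huw, hkw, hwρ⟩ :=
    exists_lagrange_multiplier hkpos huA14 (by positivity) huout.le
  obtain rfl : z = w := eq_of_tsum_norm_sub_sq_le_of_smul_eq (fun n => (hkpos n).le) hμ huw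
    (hl2 huA14) (hl2 hkw) (hl2 hzK.1) hkw hzK.1 (hwρ ▸ hzK.2) (hzproj w ⟨hkw, hwρ.le⟩)
  have hmul : ∀ n, ((1 + μ * k n : ℝ) : ℂ) * z n = u n := fun n => by
    rw [← Complex.real_smul, huw]
  refine ⟨⟨μ / (4 * ρ), by positivity, fun n => ?_⟩, ⟨μ, hμ, hmul⟩, hwρ⟩
  rw [hwρ, Real.sqrt_sq hρ.le, ← hmul n, Complex.real_smul]
  field_simp
  push_cast
  ring

/-- characterization of the metric projection onto the helicity
ball: for `u ∈ D(A^{1/2})` with `|A^{1/4}u|² > ρ²`, the projection `z = P_K(u)`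
satisfies the Lagrange-multiplier equation `z + 4λ|A^{1/4}z| A^{1/2}z = u` for
some `λ ≥ 0` (equivalently, componentwise `zₙ(1 + μkₙ) = uₙ` for some `μ ≥ 0`),
with the constraint active: `∑ₙ kₙ|zₙ|² = ρ²`. -/
theorem helicity_ball_projection_lagrange (k0 lam0 ρ : ℝ)
    (hk0 : 0 < k0) (hlam0 : 1 < lam0) (hρ : 0 < ρ)
    (k : ℕ → ℝ) (hk : ∀ n, k n = k0 * lam0 ^ n)
    (u : ℕ → ℂ) (hu : Summable (fun n => (k n) ^ 2 * ‖u n‖ ^ 2))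
    (huout : ρ ^ 2 < ∑' n, k n * ‖u n‖ ^ 2)
    (huA14 : Summable (fun n => k n * ‖u n‖ ^ 2))
    (z : ℕ → ℂ) (hzK : inHelicityBall k ρ z)
    (hzproj : ∀ y : ℕ → ℂ, inHelicityBall k ρ y →
      ∑' n, ‖u n - z n‖ ^ 2 ≤ ∑' n, ‖u n - y n‖ ^ 2) :
    (∃ l : ℝ, 0 ≤ l ∧ ∀ n,
        z n + (4 * l * Real.sqrt (∑' m, k m * ‖z m‖ ^ 2) * k n : ℝ) • z n = u n)
      ∧ (∃ μ : ℝ, 0 ≤ μ ∧ ∀ n, ((1 + μ * k n : ℝ) : ℂ) * z n = u n)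
      ∧ ∑' n, k n * ‖z n‖ ^ 2 = ρ ^ 2 :=
  helicity_ball_projection_lagrange_general k0 lam0 ρ hk0 hlam0 hρ k hk u huout huA14 z hzK hzproj
end

section
/- Lipschitz continuity of the data-to-solution difference in the linearized estimate: if û ∈ L²([0,T];V) solves dû/dt + νAû + B(u,û) + B(û,u) + B(û,û) = λh with û(0) = 0, where Re(B(u,û),û) = 0, Re(B(û,û),û) = 0, and |Re(B(û,u),û)| ≤ C|û|‖u‖_V‖û‖_V, then ‖û‖_{L²(0,T;V)} ≤ C(‖u‖_{L²(0,T;V)}, ν) |λ| ‖h‖_{L²(0,T;H)}. -/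
/-!
Testing the equation against `û` kills `B(u, û)` and `B(û, û)`, and after Young's inequality the
energy `y = ‖û‖²` satisfies `y' + ν‖û‖_V² ≤ g y + λ²‖h‖²` with `g = C_b²‖u‖_V²/ν + 1`, which is
only integrable in time. Gronwall's lemma is therefore run through the maximum of `y` instead of an
exponential: over any time interval on which `∫ g ≤ 1/2`, the term `g y` is absorbed by that
maximum, so `y` at most doubles (up to the forcing). About `2 ∫₀ᵀ g` such intervals cover
`[0, T]`, which bounds `sup y` by `2^(N+2) λ² ‖h‖²_{L²H}`; integrating the energy inequality once
more bounds `ν ‖û‖²_{L²V}`.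
-/

open MeasureTheory intervalIntegral Set

theorem le_two_mul_add_of_sub_le_half {y G : ℝ → ℝ} {a b A s t : ℝ}
    (hy : ContinuousOn y (Icc a b)) (hy0 : ∀ r ∈ Icc a b, 0 ≤ y r)
    (hG : MonotoneOn G (Icc a b))
    (hgrowth : ∀ s ∈ Icc a b, ∀ t ∈ Icc s b, ∀ M, (∀ r ∈ Icc s t, y r ≤ M) →
      y t ≤ y s + A + (G t - G s) * M)
    (hs : s ∈ Icc a b) (ht : t ∈ Icc s b) (hGst : G t - G s ≤ 1 / 2) :
    y t ≤ 2 * (y s + A) := by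
  have hsub : Icc s t ⊆ Icc a b := Icc_subset_Icc hs.1 ht.2
  obtain ⟨r, hr, hr_max⟩ :=
    isCompact_Icc.exists_isMaxOn (nonempty_Icc.2 ht.1) (hy.mono hsub)
  have hyr := hgrowth s hs r ⟨hr.1, hr.2.trans ht.2⟩ (y r)
    fun x hx => hr_max ⟨hx.1, hx.2.trans hr.2⟩
  have hGr : G r ≤ G t := hG (hsub hr) (hsub ⟨ht.1, le_rfl⟩) hr.2
  have hGs : G s ≤ G r := hG hs (hsub hr) hr.1
  have hyt : y t ≤ y r := hr_max ⟨ht.1, le_rfl⟩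
  nlinarith [hy0 r (hsub hr)]

theorem add_two_mul_le_pow_mul {y G : ℝ → ℝ} {a b A : ℝ} (hA : 0 ≤ A)
    (hy : ContinuousOn y (Icc a b)) (hy0 : ∀ r ∈ Icc a b, 0 ≤ y r)
    (hGc : ContinuousOn G (Icc a b)) (hG : MonotoneOn G (Icc a b))
    (hgrowth : ∀ s ∈ Icc a b, ∀ t ∈ Icc s b, ∀ M, (∀ r ∈ Icc s t, y r ≤ M) →
      y t ≤ y s + A + (G t - G s) * M)
    (n : ℕ) : ∀ t ∈ Icc a b, G t - G a ≤ (n + 1) / 2 →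
      y t + 2 * A ≤ 2 ^ (n + 1) * (y a + 2 * A) := by
  induction n with
  | zero =>
    intro t ht hGt
    have := le_two_mul_add_of_sub_le_half hy hy0 hG hgrowth ⟨le_rfl, ht.1.trans ht.2⟩ ht
      (by simpa using hGt)
    norm_num
    linarith
  | succ n ih =>
    intro t ht hGt
    have hya : 0 ≤ y a + 2 * A := by linarith [hy0 a ⟨le_rfl, ht.1.trans ht.2⟩]
    by_cases hGt' : G t - G a ≤ (n + 1) / 2
    · calc y t + 2 * A ≤ 2 ^ (n + 1) * (y a + 2 * A) := ih t ht hGt'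
        _ ≤ 2 ^ (n + 1 + 1) * (y a + 2 * A) := by gcongr <;> norm_num
    · obtain ⟨s, hs, hGs⟩ : ∃ s ∈ Icc a t, G s = G a + (n + 1) / 2 :=
        intermediate_value_Icc ht.1 (hGc.mono (Icc_subset_Icc le_rfl ht.2))
          ⟨le_add_of_nonneg_right (by positivity), by linarith⟩
      have hsI : s ∈ Icc a b := ⟨hs.1, hs.2.trans ht.2⟩
      have hys := ih s hsI (by linarith)
      have hyt := le_two_mul_add_of_sub_le_half hy hy0 hG hgrowth hsI ⟨hs.2, ht.2⟩
        (by push_cast at hGt; linarith)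
      calc y t + 2 * A ≤ 2 * (y s + 2 * A) := by linarith
        _ ≤ 2 * (2 ^ (n + 1) * (y a + 2 * A)) := by gcongr
        _ = 2 ^ (n + 1 + 1) * (y a + 2 * A) := by ring

theorem sub_add_mul_integral_le {y e g c v : ℝ → ℝ} {s t ν M : ℝ} (hst : s ≤ t)
    (hy : ContinuousOn y (Icc s t)) (hderiv : ∀ x ∈ Ioo s t, HasDerivAt y (e x) x)
    (hle : ∀ x ∈ Ioo s t, e x + ν * v x ≤ g x * y x + c x)
    (hg0 : ∀ x ∈ Ioo s t, 0 ≤ g x) (hM : ∀ x ∈ Icc s t, y x ≤ M)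
    (hg : IntervalIntegrable g volume s t) (hc : IntervalIntegrable c volume s t)
    (hv : IntervalIntegrable v volume s t) :
    y t - y s + ν * ∫ x in s..t, v x ≤ (∫ x in s..t, g x) * M + ∫ x in s..t, c x := by
  have hφ : IntervalIntegrable (fun x => g x * M + c x - ν * v x) volume s t :=
    ((hg.mul_const M).add hc).sub (hv.const_mul ν)
  have key := sub_le_integral_of_hasDeriv_right_of_le hst hy
    (fun x hx => (hderiv x hx).hasDerivWithinAt)
    ((intervalIntegrable_iff_integrableOn_Icc_of_le hst).1 hφ)
    fun x hx => by nlinarith [hle x hx, hM x (Ioo_subset_Icc_self hx), hg0 x hx]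
  rw [integral_sub ((hg.mul_const M).add hc) (hv.const_mul ν),
    integral_add (hg.mul_const M) hc, intervalIntegral.integral_mul_const,
    intervalIntegral.integral_const_mul] at key
  linarith

theorem two_inner_add_mul_sq_le {H : Type*} [NormedAddCommGroup H] [InnerProductSpace ℝ H]
    {ν Cb lam p q : ℝ} {u d w b₁ b₂ b₃ f : H} (hν : 0 < ν)
    (heq : d + ν • w + b₁ + b₂ + b₃ = lam • f) (hw : inner ℝ w u = q ^ 2)
    (hb₁ : inner ℝ b₁ u = 0) (hb₃ : inner ℝ b₃ u = 0)
    (hb₂ : |inner ℝ b₂ u| ≤ Cb * ‖u‖ * p * q) :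
    2 * inner ℝ u d + ν * q ^ 2 ≤ (Cb ^ 2 / ν * p ^ 2 + 1) * ‖u‖ ^ 2 + lam ^ 2 * ‖f‖ ^ 2 := by
  have hd : inner ℝ u d = lam * inner ℝ f u - ν * q ^ 2 - inner ℝ b₂ u := by
    have := congrArg (fun z => inner ℝ z u) heq
    simp only [inner_add_left, real_inner_smul_left, hw, hb₁, hb₃] at this
    rw [real_inner_comm]
    linarith
  have hforce : 2 * (lam * inner ℝ f u) ≤ lam ^ 2 * ‖f‖ ^ 2 + ‖u‖ ^ 2 := by
    have h := real_inner_le_norm (lam • f) u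
    rw [real_inner_smul_left, norm_smul, Real.norm_eq_abs] at h
    nlinarith [two_mul_le_add_sq (|lam| * ‖f‖) ‖u‖, sq_abs lam]
  -- Young's inequality, spending half of the dissipation `2 ν q²`
  have hstretch : -2 * inner ℝ b₂ u ≤ Cb ^ 2 / ν * p ^ 2 * ‖u‖ ^ 2 + ν * q ^ 2 := by
    have hyoung : 2 * (Cb * ‖u‖ * p) * q ≤ (Cb * ‖u‖ * p) ^ 2 / ν + ν * q ^ 2 := by
      rw [div_add' _ _ _ hν.ne', le_div_iff₀ hν]
      nlinarith [sq_nonneg (Cb * ‖u‖ * p - ν * q)]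
    have : (Cb * ‖u‖ * p) ^ 2 / ν = Cb ^ 2 / ν * p ^ 2 * ‖u‖ ^ 2 := by ring
    linarith [neg_le_abs (inner ℝ b₂ u)]
  rw [hd]
  linarith

theorem sqrt_le_sqrt_div_mul_abs_mul_sqrt {ν K I lam X : ℝ} (hν : 0 < ν) (hK : 0 ≤ K)
    (h : ν * I ≤ K * (lam ^ 2 * X)) : √I ≤ √(K / ν) * |lam| * √X := by
  rw [← Real.sqrt_sq_eq_abs, ← Real.sqrt_mul (by positivity), ← Real.sqrt_mul (by positivity)]
  refine Real.sqrt_le_sqrt ?_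
  rw [mul_assoc, div_mul_eq_mul_div, le_div_iff₀ hν]
  linarith

theorem add_two_mul_le_pow_mul_of_integral {y g : ℝ → ℝ} {a b A : ℝ} (hA : 0 ≤ A)
    (hy : ContinuousOn y (Icc a b)) (hy0 : ∀ r ∈ Icc a b, 0 ≤ y r)
    (hg : IntervalIntegrable g volume a b) (hg0 : ∀ x ∈ Icc a b, 0 ≤ g x)
    (hgrowth : ∀ s ∈ Icc a b, ∀ t ∈ Icc s b, ∀ M, (∀ r ∈ Icc s t, y r ≤ M) →
      y t ≤ y s + A + (∫ x in s..t, g x) * M)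
    {n : ℕ} (hn : ∫ x in a..b, g x ≤ (n + 1) / 2) :
    ∀ t ∈ Icc a b, y t + 2 * A ≤ 2 ^ (n + 1) * (y a + 2 * A) := by
  have hab : ∀ t ∈ Icc a b, IntervalIntegrable g volume a t := fun t ht =>
    hg.mono_set (uIcc_subset_uIcc left_mem_uIcc (Icc_subset_uIcc ht))
  have hsub : ∀ s ∈ Icc a b, ∀ t ∈ Icc s b,
      (∫ x in a..t, g x) - ∫ x in a..s, g x = ∫ x in s..t, g x := fun s hs t ht =>
    integral_interval_sub_left (hab t ⟨hs.1.trans ht.1, ht.2⟩) (hab s hs)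
  have hnonneg : ∀ s ∈ Icc a b, ∀ t ∈ Icc s b, 0 ≤ ∫ x in s..t, g x := fun s hs t ht =>
    integral_nonneg ht.1 fun x hx => hg0 x ⟨hs.1.trans hx.1, hx.2.trans ht.2⟩
  refine fun t ht => add_two_mul_le_pow_mul (G := fun t => ∫ x in a..t, g x) hA hy hy0 ?_ ?_
    (fun s hs t ht => by rw [hsub s hs t ht]; exact hgrowth s hs t ht) n t ht ?_
  · simpa only [uIcc_of_le (ht.1.trans ht.2)] using
      continuousOn_primitive_interval' hg left_mem_uIcc
  · intro s hs t ht hst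
    have := hnonneg s hs t ⟨hst, ht.2⟩
    linarith [hsub s hs t ⟨hst, ht.2⟩]
  · have := hnonneg t ht b ⟨ht.2, le_rfl⟩
    simp only [integral_same, sub_zero]
    linarith [hsub t ht b ⟨ht.2, le_rfl⟩]

theorem mul_integral_le_of_energy_inequality {y g c v : ℝ → ℝ} {a b ν : ℝ} {n : ℕ}
    (hab : a ≤ b) (hν : 0 ≤ ν) (hy : ContinuousOn y (Icc a b)) (hy0 : ∀ r ∈ Icc a b, 0 ≤ y r)
    (hya : y a = 0) (hg : IntervalIntegrable g volume a b) (hg0 : ∀ x ∈ Icc a b, 0 ≤ g x)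
    (hc : IntervalIntegrable c volume a b) (hc0 : ∀ x, 0 ≤ c x) (hv0 : ∀ x, 0 ≤ v x)
    (hn : ∫ x in a..b, g x ≤ (n + 1) / 2)
    (henergy : ∀ s ∈ Icc a b, ∀ t ∈ Icc s b, ∀ M, (∀ r ∈ Icc s t, y r ≤ M) →
      y t - y s + ν * ∫ x in s..t, v x ≤ (∫ x in s..t, g x) * M + ∫ x in s..t, c x) :
    ν * ∫ x in a..b, v x ≤ (2 ^ (n + 2) * (∫ x in a..b, g x) + 1) * ∫ x in a..b, c x := by
  set A := ∫ x in a..b, c x with hA_def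
  have hA : 0 ≤ A := integral_nonneg hab fun x _ => hc0 x
  have hgrowth : ∀ s ∈ Icc a b, ∀ t ∈ Icc s b, ∀ M, (∀ r ∈ Icc s t, y r ≤ M) →
      y t ≤ y s + A + (∫ x in s..t, g x) * M := by
    intro s hs t ht M hM
    have hcA : ∫ x in s..t, c x ≤ A :=
      integral_mono_interval hs.1 ht.1 ht.2 (ae_of_all _ hc0) hc
    have hv : 0 ≤ ν * ∫ x in s..t, v x := mul_nonneg hν (integral_nonneg ht.1 fun x _ => hv0 x)
    linarith [henergy s hs t ht M hM]
  have hbound : ∀ t ∈ Icc a b, y t ≤ 2 ^ (n + 2) * A := by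
    intro t ht
    have := add_two_mul_le_pow_mul_of_integral hA hy hy0 hg hg0 hgrowth hn t ht
    rw [hya] at this
    rw [pow_succ _ (n + 1)]
    linarith
  have := henergy a ⟨le_rfl, hab⟩ b ⟨hab, le_rfl⟩ _ hbound
  rw [← hA_def, hya] at this
  linear_combination this + hy0 b ⟨hab, le_rfl⟩

theorem linearized_solution_lipschitz_estimate_general
    (H : Type*) [NormedAddCommGroup H] [InnerProductSpace ℝ H]
    (T ν Cb : ℝ) (hT : 0 < T) (hν : 0 < ν)
    (nVu : ℝ → ℝ)  -- `t ↦ ‖u(t)‖_V` for the fixed reference solution `u`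
    (hnVu : IntervalIntegrable (fun t => (nVu t) ^ 2) MeasureTheory.volume 0 T) :
    ∃ C > 0, ∀ (lam : ℝ) (h uhat D Auh B1 B2 B3 : ℝ → H) (nVhat : ℝ → ℝ),
      (∀ t ∈ Set.Icc (0 : ℝ) T, HasDerivAt uhat (D t) t) →
      (∀ t ∈ Set.Icc (0 : ℝ) T,
        D t + ν • Auh t + B1 t + B2 t + B3 t = lam • h t) →
      uhat 0 = 0 →
      (∀ t ∈ Set.Icc (0 : ℝ) T, 0 ≤ nVhat t) →
      (∀ t ∈ Set.Icc (0 : ℝ) T, (inner ℝ (Auh t) (uhat t) : ℝ) = (nVhat t) ^ 2) →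
      (∀ t ∈ Set.Icc (0 : ℝ) T, (inner ℝ (B1 t) (uhat t) : ℝ) = 0) →
      (∀ t ∈ Set.Icc (0 : ℝ) T, (inner ℝ (B3 t) (uhat t) : ℝ) = 0) →
      (∀ t ∈ Set.Icc (0 : ℝ) T,
        |(inner ℝ (B2 t) (uhat t) : ℝ)| ≤ Cb * ‖uhat t‖ * nVu t * nVhat t) →
      IntervalIntegrable (fun t => ‖h t‖ ^ 2) MeasureTheory.volume 0 T →
      IntervalIntegrable (fun t => (nVhat t) ^ 2) MeasureTheory.volume 0 T →
      Real.sqrt (∫ t in (0 : ℝ)..T, (nVhat t) ^ 2)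
        ≤ C * |lam| * Real.sqrt (∫ t in (0 : ℝ)..T, ‖h t‖ ^ 2) := by
  set g : ℝ → ℝ := fun t => Cb ^ 2 / ν * nVu t ^ 2 + 1
  have hg : IntervalIntegrable g volume 0 T := (hnVu.const_mul _).add intervalIntegrable_const
  have hg0 : ∀ t, 0 ≤ g t := fun t => by positivity
  have hJ : 0 ≤ ∫ t in (0 : ℝ)..T, g t := integral_nonneg hT.le fun t _ => hg0 t
  obtain ⟨N, hN⟩ : ∃ N : ℕ, ∫ t in (0 : ℝ)..T, g t ≤ (N + 1) / 2 :=
    ⟨⌈2 * ∫ t in (0 : ℝ)..T, g t⌉₊, by linarith [Nat.le_ceil (2 * ∫ t in (0 : ℝ)..T, g t)]⟩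
  have hK : 0 < 2 ^ (N + 2) * (∫ t in (0 : ℝ)..T, g t) + 1 :=
    add_pos_of_nonneg_of_pos (mul_nonneg (by positivity) hJ) one_pos
  refine ⟨√((2 ^ (N + 2) * (∫ t in (0 : ℝ)..T, g t) + 1) / ν),
    Real.sqrt_pos.2 (div_pos hK hν), ?_⟩
  intro lam h uhat D Auh B1 B2 B3 nVhat hD heq hu0 _ hAu hB1 hB3 hB2 hh hV
  have hy : ContinuousOn (fun t => ‖uhat t‖ ^ 2) (Icc 0 T) := fun t ht =>
    (hD t ht).norm_sq.continuousAt.continuousWithinAt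
  have hc := hh.const_mul (lam ^ 2)
  have henergy : ∀ s ∈ Icc 0 T, ∀ t ∈ Icc s T, ∀ M, (∀ r ∈ Icc s t, ‖uhat r‖ ^ 2 ≤ M) →
      ‖uhat t‖ ^ 2 - ‖uhat s‖ ^ 2 + ν * ∫ r in s..t, nVhat r ^ 2
        ≤ (∫ r in s..t, g r) * M + ∫ r in s..t, lam ^ 2 * ‖h r‖ ^ 2 := by
    intro s hs t ht M hM
    have hsub : uIcc s t ⊆ uIcc 0 T :=
      uIcc_subset_uIcc (Icc_subset_uIcc hs) (Icc_subset_uIcc ⟨hs.1.trans ht.1, ht.2⟩)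
    have hIoo : Ioo s t ⊆ Icc 0 T := Ioo_subset_Icc_self.trans (Icc_subset_Icc hs.1 ht.2)
    exact sub_add_mul_integral_le ht.1 (hy.mono (Icc_subset_Icc hs.1 ht.2))
      (fun x hx => (hD x (hIoo hx)).norm_sq)
      (fun x hx => two_inner_add_mul_sq_le hν (heq x (hIoo hx)) (hAu x (hIoo hx))
        (hB1 x (hIoo hx)) (hB3 x (hIoo hx)) (hB2 x (hIoo hx)))
      (fun x _ => hg0 x) hM (hg.mono_set hsub) (hc.mono_set hsub) (hV.mono_set hsub)
  have hbound := mul_integral_le_of_energy_inequality hT.le hν.le hy (fun t _ => sq_nonneg _)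
    (by simp [hu0]) hg (fun t _ => hg0 t) hc (fun t => by positivity) (fun t => sq_nonneg _)
    hN henergy
  rw [intervalIntegral.integral_const_mul] at hbound
  exact sqrt_le_sqrt_div_mul_abs_mul_sqrt hν hK.le hbound

/-- Lipschitz continuity of the data-to-solution difference in the
linearized estimate.  If `û` solves
`dû/dt + νAû + B(u,û) + B(û,u) + B(û,û) = λh`, `û(0) = 0`, with the
orthogonality properties `Re(B(u,û),û) = 0`, `Re(B(û,û),û) = 0`, the bound
`|Re(B(û,u),û)| ≤ C|û|‖u‖_V‖û‖_V` and `Re(Aû,û) = ‖û‖_V²`, then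
`‖û‖_{L²(0,T;V)} ≤ C(‖u‖_{L²(0,T;V)}, ν) |λ| ‖h‖_{L²(0,T;H)}`,
with a constant depending only on `‖u‖_{L²(0,T;V)}`, `ν` (and the fixed data). -/
theorem linearized_solution_lipschitz_estimate
    (H : Type*) [NormedAddCommGroup H] [InnerProductSpace ℝ H] [CompleteSpace H]
    (T ν Cb : ℝ) (hT : 0 < T) (hν : 0 < ν) (hCb : 0 ≤ Cb)
    (nVu : ℝ → ℝ)  -- `t ↦ ‖u(t)‖_V` for the fixed reference solution `u`
    (hnVu : IntervalIntegrable (fun t => (nVu t) ^ 2) MeasureTheory.volume 0 T) :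
    ∃ C > 0, ∀ (lam : ℝ) (h uhat D Auh B1 B2 B3 : ℝ → H) (nVhat : ℝ → ℝ),
      (∀ t ∈ Set.Icc (0 : ℝ) T, HasDerivAt uhat (D t) t) →
      (∀ t ∈ Set.Icc (0 : ℝ) T,
        D t + ν • Auh t + B1 t + B2 t + B3 t = lam • h t) →
      uhat 0 = 0 →
      (∀ t ∈ Set.Icc (0 : ℝ) T, 0 ≤ nVhat t) →
      (∀ t ∈ Set.Icc (0 : ℝ) T, (inner ℝ (Auh t) (uhat t) : ℝ) = (nVhat t) ^ 2) →
      (∀ t ∈ Set.Icc (0 : ℝ) T, (inner ℝ (B1 t) (uhat t) : ℝ) = 0) →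
      (∀ t ∈ Set.Icc (0 : ℝ) T, (inner ℝ (B3 t) (uhat t) : ℝ) = 0) →
      (∀ t ∈ Set.Icc (0 : ℝ) T,
        |(inner ℝ (B2 t) (uhat t) : ℝ)| ≤ Cb * ‖uhat t‖ * nVu t * nVhat t) →
      IntervalIntegrable (fun t => ‖h t‖ ^ 2) MeasureTheory.volume 0 T →
      IntervalIntegrable (fun t => (nVhat t) ^ 2) MeasureTheory.volume 0 T →
      Real.sqrt (∫ t in (0 : ℝ)..T, (nVhat t) ^ 2)
        ≤ C * |lam| * Real.sqrt (∫ t in (0 : ℝ)..T, ‖h t‖ ^ 2) :=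
  linearized_solution_lipschitz_estimate_general H T ν Cb hT hν nVu hnVu
end
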